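/- arXiv:2308.05519 — 4 statements merged into one kernel-verified Lean document; each statement's English description precedes it below -/
import Mathlib

section
/- Let N be a positive integer and a ≥ 0. Then Σ_{k=0}^{N-1} P(2k+2, 2N a²) = (1/2) Σ_{k=0}^{2N-1} P(k+1, 2N a²) - (e^{-2N a²}/2) · ( sinh(2N a²) - ((2N a²)^{2N+1}/(2N+1)!) · ₁F₂(1; N+1, N+3/2; N² a⁴) ). (This is the expected number of eigenvalues of the symplectic Ginibre ensemble in the centred disc of radius a.) -/
open MeasureTheory Real Filter

/-- The lower incomplete gamma function `γ(n,x) = ∫₀^x t^(n-1) e^(-t) dt`. -/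
noncomputable def lowGamma (n x : ℝ) : ℝ := ∫ t in (0:ℝ)..x, t ^ (n - 1) * Real.exp (-t)

/-- The regularized lower incomplete gamma function `P(n,x) = γ(n,x)/Γ(n)`. -/
noncomputable def regP (n x : ℝ) : ℝ := (Real.Gamma n)⁻¹ * lowGamma n x

/-- The Pochhammer symbol `(x)_k = x (x+1) ⋯ (x+k-1)`. -/
noncomputable def poch (x : ℝ) (k : ℕ) : ℝ := ∏ i ∈ Finset.range k, (x + i)

/-- The generalized hypergeometric function `₁F₂(a; b, c; z)`. -/
noncomputable def hyp1F2 (a b c z : ℝ) : ℝ :=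
  ∑' k : ℕ, poch a k / (poch b k * poch c k) * z ^ k / Nat.factorial k

/-! For integer order, `P(m + 1, x) = 1 - e^{-x} ∑_{j ≤ m} x^j / j!`, so the left side and the
first sum on the right are combinations of partial sums of the exponential series, and
`2 ∑_{k<N} P(2k+2, x) - ∑_{k<2N} P(k+1, x)` leaves only `-e^{-x}` times the odd monomials
`x^{2k+1}/(2k+1)!`, `k < N`. These are the head of the series of `sinh x`, whose tail `k ≥ N` is
`x^{2N+1}/(2N+1)! · ₁F₂(1; N+1, N+3/2; x²/4)` because
`(2N+1+2k)! = (2N+1)! · 4^k (N+1)_k (N+3/2)_k`. -/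

open Finset
open scoped Nat

noncomputable def expPartialSum (n : ℕ) (x : ℝ) : ℝ := ∑ j ∈ range n, x ^ j / j !

lemma expPartialSum_succ (n : ℕ) (x : ℝ) :
    expPartialSum (n + 1) x = expPartialSum n x + x ^ n / n ! :=
  sum_range_succ _ _

lemma expPartialSum_succ_zero (n : ℕ) : expPartialSum (n + 1) 0 = 1 := by
  simp [expPartialSum, sum_range_succ']

lemma hasDerivAt_expPartialSum_succ (n : ℕ) (x : ℝ) :
    HasDerivAt (expPartialSum (n + 1)) (expPartialSum n x) x := by
  have h := HasDerivAt.fun_sum (u := range (n + 1))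
    fun j _ => (hasDerivAt_pow j x).div_const (j ! : ℝ)
  refine h.congr_deriv ?_
  rw [sum_range_succ', expPartialSum]
  simp only [CharP.cast_eq_zero, zero_mul, zero_div, add_zero, Nat.add_sub_cancel]
  refine sum_congr rfl fun j _ => ?_
  rw [Nat.factorial_succ, Nat.cast_mul]
  field_simp

lemma lowGamma_natCast_add_one (m : ℕ) (x : ℝ) :
    lowGamma (m + 1) x = m ! * (1 - exp (-x) * expPartialSum (m + 1) x) := by
  have hderiv (t : ℝ) :
      HasDerivAt (fun y => (m ! : ℝ) * (1 - exp (-y) * expPartialSum (m + 1) y))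
        (t ^ m * exp (-t)) t := by
    have h := (((hasDerivAt_neg t).exp.mul (hasDerivAt_expPartialSum_succ m t)).const_sub
      1).const_mul (m ! : ℝ)
    refine h.congr_deriv ?_
    rw [expPartialSum_succ]
    field_simp
    ring
  have hint : IntervalIntegrable (fun t : ℝ => t ^ m * exp (-t)) volume 0 x :=
    (by fun_prop : Continuous _).intervalIntegrable _ _
  have hexp (t : ℝ) : t ^ ((m : ℝ) + 1 - 1) = t ^ m := by
    rw [add_sub_cancel_right, rpow_natCast]
  simp only [lowGamma, hexp,
    intervalIntegral.integral_eq_sub_of_hasDerivAt (fun t _ => hderiv t) hint,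
    expPartialSum_succ_zero]
  simp

lemma regP_natCast_add_one (m : ℕ) (x : ℝ) :
    regP (m + 1) x = 1 - exp (-x) * expPartialSum (m + 1) x := by
  rw [regP, lowGamma_natCast_add_one, Gamma_nat_eq_factorial, ← mul_assoc,
    inv_mul_cancel₀ (by positivity), one_mul]

lemma two_mul_sum_expPartialSum_even_sub_sum (N : ℕ) (x : ℝ) :
    2 * ∑ k ∈ range N, expPartialSum (2 * k + 2) x
        - ∑ k ∈ range (2 * N), expPartialSum (k + 1) x
      = ∑ k ∈ range N, x ^ (2 * k + 1) / (2 * k + 1)! := by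
  induction N with
  | zero => simp
  | succ N ih =>
    rw [mul_add_one, sum_range_succ, sum_range_succ, sum_range_succ, sum_range_succ,
      expPartialSum_succ (2 * N + 1)]
    linarith

lemma poch_succ (x : ℝ) (k : ℕ) : poch x (k + 1) = poch x k * (x + k) :=
  prod_range_succ _ _

lemma poch_one (k : ℕ) : poch 1 k = k ! := by
  induction k with
  | zero => simp [poch]
  | succ k ih => rw [poch_succ, ih, Nat.factorial_succ]; push_cast; ring

lemma poch_pos {x : ℝ} (hx : 0 < x) (k : ℕ) : 0 < poch x k :=
  prod_pos fun i _ => by positivity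

lemma factorial_two_mul_add_one_add_two_mul (N k : ℕ) :
    ((2 * N + 1 + 2 * k)! : ℝ) = (2 * N + 1)! * 4 ^ k * poch (N + 1) k * poch (N + 3 / 2) k := by
  induction k with
  | zero => simp [poch]
  | succ k ih =>
    rw [mul_add_one, ← add_assoc, Nat.factorial_succ, Nat.factorial_succ, poch_succ, poch_succ]
    push_cast
    rw [ih]
    ring

lemma pow_div_factorial_mul_hyp1F2 (N : ℕ) (x : ℝ) :
    x ^ (2 * N + 1) / (2 * N + 1)! * hyp1F2 1 (N + 1) (N + 3 / 2) (x ^ 2 / 4)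
      = ∑' k, x ^ (2 * (k + N) + 1) / (2 * (k + N) + 1)! := by
  rw [hyp1F2, ← tsum_mul_left]
  refine tsum_congr fun k => ?_
  rw [poch_one, show 2 * (k + N) + 1 = 2 * N + 1 + 2 * k by ring,
    factorial_two_mul_add_one_add_two_mul, div_pow]
  have := poch_pos (x := N + 1) (by positivity) k
  have := poch_pos (x := N + 3 / 2) (by positivity) k
  field_simp
  ring

lemma sinh_sub_pow_div_factorial_mul_hyp1F2 (N : ℕ) (x : ℝ) :
    sinh x - x ^ (2 * N + 1) / (2 * N + 1)! * hyp1F2 1 (N + 1) (N + 3 / 2) (x ^ 2 / 4)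
      = ∑ k ∈ range N, x ^ (2 * k + 1) / (2 * k + 1)! := by
  rw [pow_div_factorial_mul_hyp1F2, sinh_eq_tsum,
    ← (hasSum_sinh x).summable.sum_add_tsum_nat_add N, add_sub_cancel_right]

theorem expected_number_GinSE_general (N : ℕ) (a : ℝ) :
    ∑ k ∈ Finset.range N, regP (2 * k + 2) (2 * N * a ^ 2)
      = (1 / 2) * ∑ k ∈ Finset.range (2 * N), regP (k + 1) (2 * N * a ^ 2)
        - (Real.exp (-(2 * N * a ^ 2)) / 2) *
          (Real.sinh (2 * N * a ^ 2)
            - (2 * N * a ^ 2) ^ (2 * N + 1) / Nat.factorial (2 * N + 1)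
              * hyp1F2 1 (N + 1) (N + 3 / 2) (N ^ 2 * a ^ 4)) := by
  set x : ℝ := 2 * N * a ^ 2
  have hz : (N : ℝ) ^ 2 * a ^ 4 = x ^ 2 / 4 := by ring
  have hP (k : ℕ) : regP (2 * k + 2) x = 1 - exp (-x) * expPartialSum (2 * k + 2) x := by
    exact_mod_cast regP_natCast_add_one (2 * k + 1) x
  simp only [hz, hP, regP_natCast_add_one, sum_sub_distrib, ← mul_sum, sum_const, card_range,
    nsmul_eq_mul, mul_one]
  push_cast
  linear_combination (-exp (-x) / 2) * two_mul_sum_expPartialSum_even_sub_sum N x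
    + (exp (-x) / 2) * sinh_sub_pow_div_factorial_mul_hyp1F2 N x

theorem expected_number_GinSE (N : ℕ) (hN : 0 < N) (a : ℝ) (ha : 0 ≤ a) :
    ∑ k ∈ Finset.range N, regP (2 * k + 2) (2 * N * a ^ 2)
      = (1 / 2) * ∑ k ∈ Finset.range (2 * N), regP (k + 1) (2 * N * a ^ 2)
        - (Real.exp (-(2 * N * a ^ 2)) / 2) *
          (Real.sinh (2 * N * a ^ 2)
            - (2 * N * a ^ 2) ^ (2 * N + 1) / Nat.factorial (2 * N + 1)
              * hyp1F2 1 (N + 1) (N + 3 / 2) (N ^ 2 * a ^ 4)) :=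
  expected_number_GinSE_general N a
end

section
/- For every integer N ≥ 2 and every a ≥ 0, (1/√2) · Σ_{k=0}^{N-2} ((2k-1)!!/(2k)!!) · P(k + 1/2, N a²) = √(2/π) · ( a √N · Γ(N-1, N a²) + γ(N - 1/2, N a²) ) / (N-2)!. -/
open MeasureTheory Real Filter

/-- The upper incomplete gamma function `Γ(n,x) = ∫ₓ^∞ t^(n-1) e^(-t) dt`. -/
noncomputable def upGamma (n x : ℝ) : ℝ := ∫ t in Set.Ioi x, t ^ (n - 1) * Real.exp (-t)

/-!
The half-integer values `Γ(k + 1/2) = (2k - 1)‼ √π / 2^k` turn the `k`-th summand into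
`γ(k + 1/2, x) / (k! √π)`, where `x = N a²`. The partial sums of `γ(k + 1/2, x) / k!` are then
computed by induction from the recurrences `γ(s + 1, x) = s γ(s, x) - x^s e^(-x)` and
`Γ(s + 1, x) = s Γ(s, x) + x^s e^(-x)`: the boundary terms cancel because `√x · x^(m + 1) = x^(m + 3/2)`.
-/

open scoped Nat

section IncompleteGamma

variable {s x : ℝ}

lemma intervalIntegrable_rpow_sub_one_mul_exp_neg (hs : 0 < s) (x : ℝ) :
    IntervalIntegrable (fun t => t ^ (s - 1) * exp (-t)) volume 0 x :=
  (intervalIntegral.intervalIntegrable_rpow' (by linarith)).mul_continuousOn (by fun_prop)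

lemma lowGamma_add_one (hs : 0 < s) (hx : 0 ≤ x) :
    lowGamma (s + 1) x = s * lowGamma s x - x ^ s * exp (-x) := by
  have hderiv : ∀ t ∈ Set.Ioo 0 x, HasDerivAt (fun t => -(t ^ s * exp (-t)))
      (t ^ s * exp (-t) - s * (t ^ (s - 1) * exp (-t))) t := fun t ht =>
    (((hasDerivAt_rpow_const (Or.inl ht.1.ne')).mul (hasDerivAt_neg t).exp).neg).congr_deriv
      (by ring)
  have hcont : ContinuousOn (fun t => -(t ^ s * exp (-t))) (Set.Icc 0 x) :=
    ((continuous_id.rpow_const fun _ => Or.inr hs.le).mul (by fun_prop)).neg.continuousOn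
  have hint_s := (intervalIntegrable_rpow_sub_one_mul_exp_neg hs x).const_mul s
  have hint_succ : IntervalIntegrable (fun t => t ^ s * exp (-t)) volume 0 x := by
    simpa using intervalIntegrable_rpow_sub_one_mul_exp_neg (add_pos hs one_pos) x
  have hFTC := intervalIntegral.integral_eq_sub_of_hasDerivAt_of_le hx hcont hderiv
    (hint_succ.sub hint_s)
  rw [intervalIntegral.integral_sub hint_succ hint_s, intervalIntegral.integral_const_mul,
    zero_rpow hs.ne', zero_mul, neg_zero, sub_zero] at hFTC
  simp only [lowGamma, add_sub_cancel_right]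
  linarith

lemma lowGamma_add_upGamma (hs : 0 < s) (hx : 0 ≤ x) :
    lowGamma s x + upGamma s x = Gamma s := by
  have hint : IntegrableOn (fun t => t ^ (s - 1) * exp (-t)) (Set.Ioi 0) :=
    (GammaIntegral_convergent hs).congr_fun (fun t _ => mul_comm _ _) measurableSet_Ioi
  rw [Gamma_eq_integral hs, lowGamma, upGamma, intervalIntegral.integral_of_le hx,
    ← setIntegral_union (Set.Ioc_disjoint_Ioi le_rfl) measurableSet_Ioi
      (hint.mono_set Set.Ioc_subset_Ioi_self) (hint.mono_set (Set.Ioi_subset_Ioi hx)),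
    Set.Ioc_union_Ioi_eq_Ioi hx]
  exact setIntegral_congr_fun measurableSet_Ioi fun t _ => mul_comm _ _

lemma upGamma_add_one (hs : 0 < s) (hx : 0 ≤ x) :
    upGamma (s + 1) x = s * upGamma s x + x ^ s * exp (-x) := by
  have h := lowGamma_add_upGamma (add_pos hs one_pos) hx
  rw [lowGamma_add_one hs hx, Gamma_add_one hs.ne', ← lowGamma_add_upGamma hs hx] at h
  linarith

lemma upGamma_one (x : ℝ) : upGamma 1 x = exp (-x) := by
  simp [upGamma, integral_exp_Iic]

end IncompleteGamma

lemma doubleFactorial_div_mul_inv_Gamma_nat_add_half (k : ℕ) :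
    ((2 * k - 1)‼ : ℝ) / (2 * k)‼ * (Gamma (k + 1 / 2))⁻¹ = (k ! * √π)⁻¹ := by
  have : (0 : ℝ) < (2 * k - 1)‼ := by exact_mod_cast Nat.doubleFactorial_pos _
  rw [Gamma_nat_add_half, Nat.doubleFactorial_two_mul]
  push_cast
  field_simp

lemma sum_lowGamma_nat_add_half_div_factorial (m : ℕ) {x : ℝ} (hx : 0 ≤ x) :
    ∑ k ∈ Finset.range (m + 1), lowGamma (k + 1 / 2) x / k !
      = 2 * (√x * upGamma (m + 1) x + lowGamma (m + 3 / 2) x) / m ! := by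
  induction m with
  | zero =>
    have h : lowGamma (0 + 3 / 2) x = 1 / 2 * lowGamma (1 / 2) x - √x * exp (-x) := by
      rw [show (0 : ℝ) + 3 / 2 = 1 / 2 + 1 by norm_num, lowGamma_add_one (by norm_num) hx,
        sqrt_eq_rpow]
    simp only [Finset.sum_range_one, Nat.cast_zero, zero_add, Nat.factorial_zero, Nat.cast_one,
      div_one, upGamma_one] at h ⊢
    linarith
  | succ m ih =>
    have hpow : √x * x ^ ((m : ℝ) + 1) = x ^ ((m : ℝ) + 3 / 2) := by
      rw [sqrt_eq_rpow, ← rpow_add' hx (by positivity)]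
      ring_nf
    rw [Finset.sum_range_succ, ih, Nat.factorial_succ, Nat.cast_mul, Nat.cast_succ,
      show (m : ℝ) + 1 + 1 / 2 = m + 3 / 2 by ring, show (m : ℝ) + 1 + 3 / 2 = m + 3 / 2 + 1 by ring,
      upGamma_add_one (s := m + 1) (by positivity) hx, lowGamma_add_one (by positivity) hx, ← hpow]
    field_simp
    ring

theorem doubleFactorial_sum_eq_incompleteGamma (N : ℕ) (hN : 2 ≤ N) (a : ℝ) (ha : 0 ≤ a) :
    (1 / Real.sqrt 2) * ∑ k ∈ Finset.range (N - 1),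
        (Nat.doubleFactorial (2 * k - 1) : ℝ) / (Nat.doubleFactorial (2 * k) : ℝ)
          * regP (k + 1 / 2) (N * a ^ 2)
      = Real.sqrt (2 / π)
          * (a * Real.sqrt N * upGamma (N - 1) (N * a ^ 2) + lowGamma (N - 1 / 2) (N * a ^ 2))
          / Nat.factorial (N - 2) := by
  obtain ⟨m, rfl⟩ : ∃ m, N = m + 2 := ⟨N - 2, by omega⟩
  have hterm (k : ℕ) : ((2 * k - 1)‼ : ℝ) / (2 * k)‼ * regP (k + 1 / 2) ((m + 2 : ℕ) * a ^ 2)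
      = lowGamma (k + 1 / 2) ((m + 2 : ℕ) * a ^ 2) / k ! / √π := by
    rw [regP, ← mul_assoc, doubleFactorial_div_mul_inv_Gamma_nat_add_half]
    field_simp
  have hsqrt : √((m + 2 : ℕ) * a ^ 2) = a * √(m + 2 : ℕ) := by
    rw [sqrt_mul (by positivity), sqrt_sq ha, mul_comm]
  simp only [hterm, ← Finset.sum_div]
  rw [show m + 2 - 1 = m + 1 by omega, show m + 2 - 2 = m by omega,
    sum_lowGamma_nat_add_half_div_factorial m (by positivity), hsqrt,
    sqrt_div zero_le_two]
  push_cast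
  rw [show (m : ℝ) + 2 - 1 = m + 1 by ring, show (m : ℝ) + 2 - 1 / 2 = m + 3 / 2 by ring]
  field_simp
  rw [sq_sqrt zero_le_two]
end

section
/- lim_{N→∞} ( N - Σ_{k=0}^{N-1} P(k+1, N) ) / √N = 1/√(2π). (This gives the expected number of eigenvalues of the complex Ginibre ensemble lying outside the limiting support, to leading order √(N/(2π)).) -/
open MeasureTheory Real Filter

/-!
For integer order, `P(k+1, x) = 1 - e^{-x} ∑_{j ≤ k} x^j / j!`. Exchanging the double sum,
`N - ∑_{k<N} P(k+1, N) = e^{-N} ∑_{j<N} (N - j) N^j / j!`, which telescopes to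
`e^{-N} N^{N+1} / N!`. Divided by `√N` this is `1 / (√2 · stirlingSeq N)`, and Stirling's formula
`stirlingSeq N → √π` gives the limit.
-/

open Finset
open scoped Nat

theorem hasDerivAt_sum_range_succ_pow_div_factorial (k : ℕ) (t : ℝ) :
    HasDerivAt (fun t : ℝ => ∑ j ∈ range (k + 1), t ^ j / j !)
      (∑ j ∈ range k, t ^ j / j !) t := by
  induction k with
  | zero => simpa using hasDerivAt_const t (1 : ℝ)
  | succ k ih =>
    simp_rw [sum_range_succ _ (k + 1)]
    refine (ih.add ((hasDerivAt_pow (k + 1) t).div_const ((k + 1)! : ℝ))).congr_deriv ?_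
    rw [sum_range_succ, Nat.factorial_succ]
    push_cast
    field_simp

theorem hasDerivAt_exp_neg_mul_sum_range_succ_pow_div_factorial (k : ℕ) (t : ℝ) :
    HasDerivAt (fun t : ℝ => exp (-t) * ∑ j ∈ range (k + 1), t ^ j / j !)
      (-(t ^ k / k ! * exp (-t))) t := by
  have hexp : HasDerivAt (fun t : ℝ => exp (-t)) (-exp (-t)) t := by
    simpa using (hasDerivAt_neg t).exp
  refine (hexp.mul (hasDerivAt_sum_range_succ_pow_div_factorial k t)).congr_deriv ?_
  rw [sum_range_succ]
  ring

theorem integral_pow_mul_exp_neg (k : ℕ) (x : ℝ) :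
    ∫ t in (0:ℝ)..x, t ^ k * exp (-t)
      = k ! * (1 - exp (-x) * ∑ j ∈ range (k + 1), x ^ j / j !) := by
  have hderiv (t : ℝ) (_ : t ∈ Set.uIcc 0 x) :
      HasDerivAt (fun t : ℝ => -(exp (-t) * ∑ j ∈ range (k + 1), t ^ j / j !) * k !)
        (t ^ k * exp (-t)) t := by
    refine ((hasDerivAt_exp_neg_mul_sum_range_succ_pow_div_factorial k t).neg.mul_const
      (k ! : ℝ)).congr_deriv ?_
    rw [neg_neg]
    field_simp
  have hsum_zero : ∑ j ∈ range (k + 1), (0 : ℝ) ^ j / j ! = 1 := by simp [sum_range_succ']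
  rw [intervalIntegral.integral_eq_sub_of_hasDerivAt hderiv
    (by apply Continuous.intervalIntegrable; fun_prop), neg_zero, exp_zero, hsum_zero]
  ring

theorem regP_natCast_add_one_s6 (k : ℕ) (x : ℝ) :
    regP (k + 1) x = 1 - exp (-x) * ∑ j ∈ range (k + 1), x ^ j / j ! := by
  have hk : (k : ℝ) + 1 - 1 = k := by ring
  rw [regP, lowGamma, hk]
  simp_rw [rpow_natCast]
  rw [integral_pow_mul_exp_neg, Gamma_nat_eq_factorial, inv_mul_cancel_left₀ (by positivity)]

theorem sum_range_sum_range_succ {R : Type*} [Ring R] (f : ℕ → R) (n : ℕ) :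
    ∑ k ∈ range n, ∑ j ∈ range (k + 1), f j = ∑ j ∈ range n, ((n : R) - j) * f j := by
  induction n with
  | zero => simp
  | succ n ih =>
    have hsplit (j : ℕ) : (((n + 1 : ℕ) : R) - j) * f j = ((n : R) - j) * f j + f j := by
      push_cast
      noncomm_ring
    rw [sum_range_succ, ih, sum_congr rfl fun j _ => hsplit j, sum_add_distrib,
      sum_range_succ (fun j => ((n : R) - j) * f j) n]
    simp

theorem sum_range_sub_mul_pow_div_factorial (x : ℝ) (n : ℕ) :
    ∑ j ∈ range n, (x - j) * (x ^ j / j !) = x ^ n * n / n ! := by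
  have hstep (j : ℕ) : (x - j) * (x ^ j / j !)
      = x ^ (j + 1) * ↑(j + 1) / ↑(j + 1)! - x ^ j * j / j ! := by
    rw [Nat.factorial_succ]
    push_cast
    field_simp
    ring
  simp_rw [hstep]
  simpa using sum_range_sub (fun j => x ^ j * j / j !) n

theorem natCast_sub_sum_regP (N : ℕ) :
    (N : ℝ) - ∑ k ∈ range N, regP (k + 1) N = exp (-N) * (N ^ N * N / N !) := by
  simp_rw [regP_natCast_add_one_s6, sum_sub_distrib, ← mul_sum, sum_range_sum_range_succ,
    sum_range_sub_mul_pow_div_factorial]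
  simp

theorem exp_neg_mul_pow_succ_div_factorial_div_sqrt (N : ℕ) :
    exp (-N) * (N ^ N * N / N !) / √N = (√2 * Stirling.stirlingSeq N)⁻¹ := by
  rcases N.eq_zero_or_pos with rfl | hN
  · simp [Stirling.stirlingSeq_zero]
  have hsqrt_pos : 0 < √(N : ℝ) := sqrt_pos.2 (mod_cast hN)
  have hsqrt : √(N : ℝ) ^ 2 = N := sq_sqrt (Nat.cast_nonneg N)
  have hexp : exp (-N) * exp 1 ^ N = 1 := by
    rw [← exp_nat_mul, ← exp_add]
    simp
  rw [Stirling.stirlingSeq, sqrt_mul zero_le_two, div_pow]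
  field_simp
  linear_combination (N : ℝ) * hexp - hsqrt

theorem expected_number_outside_GinUE :
    Tendsto (fun N : ℕ => ((N : ℝ) - ∑ k ∈ Finset.range N, regP (k + 1) N) / Real.sqrt N)
      atTop (nhds (1 / Real.sqrt (2 * π))) := by
  simp_rw [natCast_sub_sum_regP, exp_neg_mul_pow_succ_div_factorial_div_sqrt]
  rw [one_div, sqrt_mul zero_le_two]
  exact (Stirling.tendsto_stirlingSeq_sqrt_pi.const_mul _).inv₀ (by positivity)
end

section
/- For every R ≥ 0, √(2/π) · ∫_{{(x,y) ∈ ℝ² : x² + y² ≤ R²}} |y| · erfc(√2 |y|) · e^{2y²} dx dy = R² - √(2/π) · R + 1/2 - (1/2) e^{2R²} erfc(√2 · R). (The integrand, up to the constant, is the limiting density of complex eigenvalues of the real Ginibre ensemble at the origin, and the identity evaluates the expected number of complex eigenvalues in the disc of radius R.) -/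
open MeasureTheory Real Filter

/-- The error function `erf(x) = (2/√π) ∫₀^x e^(-t²) dt`. -/
noncomputable def erf (x : ℝ) : ℝ := (2 / Real.sqrt π) * ∫ t in (0:ℝ)..x, Real.exp (-t ^ 2)

/-- The complementary error function `erfc(x) = 1 - erf(x)`. -/
noncomputable def erfc (x : ℝ) : ℝ := 1 - erf x

/-!
Slice the disc vertically (here `a = 2`). On the slice over `x`, of half-length
`s = √(R² - x²)`, the integrand `y e^{a y²} erfc(√a y)` has the elementary antiderivative
`e^{a y²} erfc(√a y) / (2a) + y / √(aπ)`, and `e^{a s²} = e^{a R²} e^{-a x²}`. What is left is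
`∫ e^{-a x²} erf(√a s) dx`, which by Fubini read backwards is the Gaussian `∫ e^{-a |p|²}` over
the disc, computed in polar coordinates, and `∫ s dx`, half the area of the disc.
-/

open Set

lemma hasDerivAt_erf (x : ℝ) : HasDerivAt erf (2 / √π * exp (-x ^ 2)) x := by
  have hc : Continuous fun t : ℝ ↦ exp (-t ^ 2) := by fun_prop
  exact (intervalIntegral.integral_hasDerivAt_right (hc.intervalIntegrable _ _)
    (hc.stronglyMeasurableAtFilter _ _) hc.continuousAt).const_mul _

@[fun_prop]
lemma continuous_erf : Continuous erf :=
  continuous_iff_continuousAt.2 fun x ↦ (hasDerivAt_erf x).continuousAt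

lemma erf_zero : erf 0 = 0 := by simp [erf]

lemma hasDerivAt_erfc (x : ℝ) : HasDerivAt erfc (-(2 / √π * exp (-x ^ 2))) x :=
  (hasDerivAt_erf x).const_sub 1

@[fun_prop]
lemma continuous_erfc : Continuous erfc := continuous_const.sub continuous_erf

lemma erfc_zero : erfc 0 = 1 := by simp [erfc, erf_zero]

lemma intervalIntegral_neg_self_of_even {E : Type*} [NormedAddCommGroup E] [NormedSpace ℝ E]
    {f : ℝ → E} (hf : f.Even) {s : ℝ} (hi : IntervalIntegrable f volume 0 s) :
    ∫ x in -s..s, f x = (2 : ℝ) • ∫ x in (0 : ℝ)..s, f x := by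
  have hneg : ∫ x in -s..0, f x = ∫ x in (0 : ℝ)..s, f x := by
    simpa [hf.eq] using (intervalIntegral.integral_comp_neg (a := 0) (b := s) f).symm
  have hi' : IntervalIntegrable f volume (-s) 0 := by
    simpa [hf.eq] using ((IntervalIntegrable.iff_comp_neg (by simp)).1 hi).symm
  rw [← intervalIntegral.integral_add_adjacent_intervals hi' hi, hneg, two_smul]

lemma integral_exp_neg_mul_sq_eq_erf {a : ℝ} (ha : 0 < a) (x : ℝ) :
    ∫ t in (0 : ℝ)..x, exp (-a * t ^ 2) = √π / (2 * √a) * erf (√a * x) := by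
  have hsa : √a ≠ 0 := (sqrt_pos.2 ha).ne'
  have hsubst := intervalIntegral.smul_integral_comp_mul_left (a := 0) (b := x)
    (fun t ↦ exp (-t ^ 2)) √a
  simp only [mul_zero, mul_pow, sq_sqrt ha.le, smul_eq_mul] at hsubst
  rw [erf, ← hsubst]
  field_simp

lemma integral_exp_neg_mul_sq_neg_self_eq_erf {a : ℝ} (ha : 0 < a) (x : ℝ) :
    ∫ t in -x..x, exp (-a * t ^ 2) = √π / √a * erf (√a * x) := by
  have hc : Continuous fun t : ℝ ↦ exp (-a * t ^ 2) := by fun_prop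
  rw [intervalIntegral_neg_self_of_even (fun _ ↦ by simp) (hc.intervalIntegrable _ _),
    integral_exp_neg_mul_sq_eq_erf ha, smul_eq_mul]
  field_simp

lemma hasDerivAt_exp_mul_sq_mul_erfc {a : ℝ} (ha : 0 ≤ a) (y : ℝ) :
    HasDerivAt (fun y ↦ exp (a * y ^ 2) * erfc (√a * y))
      (2 * a * y * exp (a * y ^ 2) * erfc (√a * y) - 2 * √a / √π) y := by
  have hexp : HasDerivAt (fun y ↦ exp (a * y ^ 2)) (exp (a * y ^ 2) * (a * (2 * y))) y := by
    simpa using ((hasDerivAt_pow 2 y).const_mul a).exp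
  have herfc : HasDerivAt (fun y ↦ erfc (√a * y)) (-(2 / √π * exp (-(√a * y) ^ 2)) * √a) y :=
    (hasDerivAt_erfc _).comp y (by simpa using (hasDerivAt_id y).const_mul √a)
  refine (hexp.mul herfc).congr_deriv ?_
  have hinv : exp (a * y ^ 2) * exp (-(√a * y) ^ 2) = 1 := by
    rw [← exp_add, mul_pow, sq_sqrt ha, add_neg_cancel, exp_zero]
  linear_combination (-(2 * √a / √π)) * hinv

lemma integral_mul_erfc_mul_exp {a : ℝ} (ha : 0 < a) (s : ℝ) :
    ∫ y in (0 : ℝ)..s, y * erfc (√a * y) * exp (a * y ^ 2)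
      = (exp (a * s ^ 2) * erfc (√a * s) - 1) / (2 * a) + s / (√a * √π) := by
  have hsa : √a ≠ 0 := (sqrt_pos.2 ha).ne'
  have hderiv (y : ℝ) :
      HasDerivAt (fun y ↦ exp (a * y ^ 2) * erfc (√a * y) / (2 * a) + y / (√a * √π))
        (y * erfc (√a * y) * exp (a * y ^ 2)) y := by
    refine (((hasDerivAt_exp_mul_sq_mul_erfc ha.le y).div_const (2 * a)).add
      ((hasDerivAt_id y).div_const (√a * √π))).congr_deriv ?_
    field_simp
    linear_combination -mul_self_sqrt ha.le
  have hc : Continuous fun y ↦ y * erfc (√a * y) * exp (a * y ^ 2) := by fun_prop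
  rw [intervalIntegral.integral_eq_sub_of_hasDerivAt (fun y _ ↦ hderiv y)
    (hc.intervalIntegrable _ _)]
  simp only [ne_eq, two_ne_zero, not_false_eq_true, zero_pow, mul_zero, exp_zero, erfc_zero,
    mul_one, zero_div, add_zero]
  ring

lemma integral_abs_mul_erfc_mul_exp {a : ℝ} (ha : 0 < a) {s : ℝ} (hs : 0 ≤ s) :
    ∫ y in -s..s, |y| * erfc (√a * |y|) * exp (a * y ^ 2)
      = (exp (a * s ^ 2) * erfc (√a * s) - 1) / a + 2 * s / (√a * √π) := by
  have hc : Continuous fun y ↦ |y| * erfc (√a * |y|) * exp (a * y ^ 2) := by fun_prop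
  rw [intervalIntegral_neg_self_of_even (fun _ ↦ by simp) (hc.intervalIntegrable _ _), smul_eq_mul,
    intervalIntegral.integral_congr (g := fun y ↦ y * erfc (√a * y) * exp (a * y ^ 2))
      fun y hy ↦ by rw [abs_of_nonneg (uIcc_of_le hs ▸ hy).1], integral_mul_erfc_mul_exp ha]
  field_simp

def disc (R : ℝ) : Set (ℝ × ℝ) := {p | p.1 ^ 2 + p.2 ^ 2 ≤ R ^ 2}

lemma measurableSet_disc (R : ℝ) : MeasurableSet (disc R) :=
  measurableSet_le (by fun_prop) (by fun_prop)

lemma disc_subset_Icc_prod_Icc {R : ℝ} (hR : 0 ≤ R) : disc R ⊆ Icc (-R) R ×ˢ Icc (-R) R := by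
  intro p (hp : p.1 ^ 2 + p.2 ^ 2 ≤ R ^ 2)
  exact ⟨abs_le_of_sq_le_sq' (by nlinarith [sq_nonneg p.2]) hR,
    abs_le_of_sq_le_sq' (by nlinarith [sq_nonneg p.1]) hR⟩

lemma isCompact_disc {R : ℝ} (hR : 0 ≤ R) : IsCompact (disc R) :=
  (isCompact_Icc.prod isCompact_Icc).of_isClosed_subset (isClosed_le (by fun_prop) (by fun_prop))
    (disc_subset_Icc_prod_Icc hR)

lemma Continuous.integrableOn_disc {R : ℝ} (hR : 0 ≤ R) {g : ℝ × ℝ → ℝ} (hg : Continuous g) :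
    IntegrableOn g (disc R) :=
  hg.continuousOn.integrableOn_compact (isCompact_disc hR)

lemma mk_preimage_disc {R x : ℝ} (hx : x ^ 2 ≤ R ^ 2) :
    Prod.mk x ⁻¹' disc R = Icc (-√(R ^ 2 - x ^ 2)) √(R ^ 2 - x ^ 2) := by
  ext y
  simp only [disc, mem_preimage, mem_ofPred_eq, mem_Icc, ← Real.sq_le (sub_nonneg.2 hx)]
  constructor <;> intro h <;> linarith

lemma integral_disc_eq_integral_integral {R : ℝ} (hR : 0 ≤ R) {g : ℝ × ℝ → ℝ}
    (hg : IntegrableOn g (disc R)) :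
    ∫ p in disc R, g p = ∫ x in -R..R, ∫ y in -√(R ^ 2 - x ^ 2)..√(R ^ 2 - x ^ 2), g (x, y) := by
  have hsub : disc R ⊆ Icc (-R) R ×ˢ univ :=
    (disc_subset_Icc_prod_Icc hR).trans (prod_mono subset_rfl (subset_univ _))
  have hint : IntegrableOn ((disc R).indicator g) (Icc (-R) R ×ˢ univ) (volume.prod volume) := by
    rw [← Measure.volume_eq_prod]
    exact (hg.integrable_indicator (measurableSet_disc R)).integrableOn
  rw [← inter_eq_right.2 hsub, ← setIntegral_indicator (measurableSet_disc R),
    Measure.volume_eq_prod, setIntegral_prod _ hint, intervalIntegral.integral_of_le (by linarith),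
    ← integral_Icc_eq_integral_Ioc]
  refine setIntegral_congr_fun measurableSet_Icc fun x hx ↦ ?_
  have hslice (y : ℝ) :
      (disc R).indicator g (x, y) = (Prod.mk x ⁻¹' disc R).indicator (fun y ↦ g (x, y)) y := rfl
  simp only [Measure.restrict_univ, hslice]
  rw [integral_indicator ((measurableSet_disc R).preimage measurable_prodMk_left),
    mk_preimage_disc (sq_le_sq' hx.1 hx.2), integral_Icc_eq_integral_Ioc,
    ← intervalIntegral.integral_of_le (by linarith [sqrt_nonneg (R ^ 2 - x ^ 2)])]

lemma integral_disc_comp_sq_add_sq {R : ℝ} (hR : 0 ≤ R) (f : ℝ → ℝ) :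
    ∫ p in disc R, f (p.1 ^ 2 + p.2 ^ 2) = 2 * π * ∫ r in (0 : ℝ)..R, r * f (r ^ 2) := by
  have hpolar : ∀ p ∈ polarCoord.target, p.1 • (disc R).indicator (fun p ↦ f (p.1 ^ 2 + p.2 ^ 2))
      (polarCoord.symm p) = (Iic R).indicator (fun r ↦ r * f (r ^ 2)) p.1 * 1 := by
    rintro ⟨r, θ⟩ ⟨hr, -⟩
    have hnorm : (r * cos θ) ^ 2 + (r * sin θ) ^ 2 = r ^ 2 := by
      rw [mul_pow, mul_pow, ← mul_add, cos_sq_add_sin_sq, mul_one]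
    have hmem : (r * cos θ, r * sin θ) ∈ disc R ↔ r ∈ Iic R := by
      rw [disc, mem_ofPred_eq, hnorm, mem_Iic, sq_le_sq₀ (le_of_lt hr) hR]
    by_cases h : r ≤ R <;> simp [indicator, hmem, hnorm, h]
  rw [← integral_indicator (measurableSet_disc R), ← integral_comp_polarCoord_symm,
    setIntegral_congr_fun polarCoord.open_target.measurableSet hpolar, polarCoord_target,
    Measure.volume_eq_prod, setIntegral_prod_mul _ (fun _ ↦ (1 : ℝ)),
    setIntegral_indicator measurableSet_Iic, Ioi_inter_Iic, ← intervalIntegral.integral_of_le hR,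
    setIntegral_const, Measure.real, volume_Ioo, ENNReal.toReal_ofReal (by linarith [pi_pos]),
    smul_eq_mul, mul_one]
  ring

lemma integral_mul_exp_neg_mul_sq {a : ℝ} (ha : a ≠ 0) (R : ℝ) :
    ∫ r in (0 : ℝ)..R, r * exp (-a * r ^ 2) = (1 - exp (-a * R ^ 2)) / (2 * a) := by
  have hderiv (r : ℝ) :
      HasDerivAt (fun r ↦ -exp (-a * r ^ 2) / (2 * a)) (r * exp (-a * r ^ 2)) r := by
    refine (((hasDerivAt_pow 2 r).const_mul (-a)).exp.neg.div_const (2 * a)).congr_deriv ?_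
    field_simp
    ring
  rw [intervalIntegral.integral_eq_sub_of_hasDerivAt (fun r _ ↦ hderiv r)
    ((by fun_prop : Continuous fun r : ℝ ↦ r * exp (-a * r ^ 2)).intervalIntegrable _ _)]
  simp only [ne_eq, two_ne_zero, not_false_eq_true, zero_pow, mul_zero, exp_zero]
  ring

lemma integral_disc_exp_neg_mul {a : ℝ} (ha : a ≠ 0) {R : ℝ} (hR : 0 ≤ R) :
    ∫ p in disc R, exp (-a * (p.1 ^ 2 + p.2 ^ 2)) = π / a * (1 - exp (-a * R ^ 2)) := by
  rw [integral_disc_comp_sq_add_sq hR (fun u ↦ exp (-a * u)), integral_mul_exp_neg_mul_sq ha]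
  field_simp

lemma integral_exp_neg_mul_sq_mul_erf {a : ℝ} (ha : 0 < a) {R : ℝ} (hR : 0 ≤ R) :
    ∫ x in -R..R, exp (-a * x ^ 2) * erf (√a * √(R ^ 2 - x ^ 2))
      = √π / √a * (1 - exp (-a * R ^ 2)) := by
  have hslice (x : ℝ) : ∫ y in -√(R ^ 2 - x ^ 2)..√(R ^ 2 - x ^ 2), exp (-a * (x ^ 2 + y ^ 2))
      = √π / √a * (exp (-a * x ^ 2) * erf (√a * √(R ^ 2 - x ^ 2))) := by
    simp only [mul_add, exp_add, intervalIntegral.integral_const_mul,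
      integral_exp_neg_mul_sq_neg_self_eq_erf ha]
    ring
  have hgauss := (integral_disc_eq_integral_integral hR
    ((by fun_prop : Continuous fun p : ℝ × ℝ ↦ exp (-a * (p.1 ^ 2 + p.2 ^ 2))).integrableOn_disc
      hR)).symm.trans (integral_disc_exp_neg_mul ha.ne' hR)
  simp only [hslice, intervalIntegral.integral_const_mul] at hgauss
  have hπa : π / a = √π / √a * (√π / √a) := by
    rw [div_mul_div_comm, mul_self_sqrt pi_pos.le, mul_self_sqrt ha.le]
  rw [← mul_right_inj' (div_pos (sqrt_pos.2 pi_pos) (sqrt_pos.2 ha)).ne', hgauss, hπa, mul_assoc]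

lemma integral_exp_neg_mul_sq_mul_erfc {a : ℝ} (ha : 0 < a) {R : ℝ} (hR : 0 ≤ R) :
    ∫ x in -R..R, exp (-a * x ^ 2) * erfc (√a * √(R ^ 2 - x ^ 2))
      = √π / √a * (exp (-a * R ^ 2) - erfc (√a * R)) := by
  have hc₁ : Continuous fun x : ℝ ↦ exp (-a * x ^ 2) := by fun_prop
  have hc₂ : Continuous fun x ↦ exp (-a * x ^ 2) * erf (√a * √(R ^ 2 - x ^ 2)) := by fun_prop
  simp only [erfc, mul_sub, mul_one]
  rw [intervalIntegral.integral_sub (hc₁.intervalIntegrable _ _) (hc₂.intervalIntegrable _ _),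
    integral_exp_neg_mul_sq_neg_self_eq_erf ha, integral_exp_neg_mul_sq_mul_erf ha hR]
  ring

lemma integral_sqrt_sq_sub_sq {R : ℝ} (hR : 0 ≤ R) :
    ∫ x in -R..R, √(R ^ 2 - x ^ 2) = π * R ^ 2 / 2 := by
  rcases hR.eq_or_lt with rfl | hR
  · simp
  have hscale (x : ℝ) : √(R ^ 2 - x ^ 2) = R * √(1 - (x / R) ^ 2) := by
    rw [show R ^ 2 - x ^ 2 = R ^ 2 * (1 - (x / R) ^ 2) by field_simp, sqrt_mul (sq_nonneg R),
      sqrt_sq hR.le]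
  simp only [hscale, intervalIntegral.integral_const_mul,
    intervalIntegral.integral_comp_div (fun u ↦ √(1 - u ^ 2)) hR.ne', neg_div, div_self hR.ne',
    integral_sqrt_one_sub_sq, smul_eq_mul]
  ring

lemma integral_disc_abs_mul_erfc_mul_exp {a : ℝ} (ha : 0 < a) {R : ℝ} (hR : 0 ≤ R) :
    ∫ p in disc R, |p.2| * erfc (√a * |p.2|) * exp (a * p.2 ^ 2)
      = √π / √a * (R ^ 2 + (1 - exp (a * R ^ 2) * erfc (√a * R)) / a) - 2 * R / a := by
  have hslice : ∀ x ∈ uIcc (-R) R,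
      ∫ y in -√(R ^ 2 - x ^ 2)..√(R ^ 2 - x ^ 2), |y| * erfc (√a * |y|) * exp (a * y ^ 2)
        = exp (a * R ^ 2) / a * (exp (-a * x ^ 2) * erfc (√a * √(R ^ 2 - x ^ 2)))
          + 2 / (√a * √π) * √(R ^ 2 - x ^ 2) - 1 / a := by
    intro x hx
    rw [uIcc_of_le (by linarith), mem_Icc] at hx
    rw [integral_abs_mul_erfc_mul_exp ha (sqrt_nonneg _), sq_sqrt (by nlinarith),
      show a * (R ^ 2 - x ^ 2) = a * R ^ 2 + -a * x ^ 2 by ring, exp_add]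
    ring
  have hc : Continuous fun p : ℝ × ℝ ↦ |p.2| * erfc (√a * |p.2|) * exp (a * p.2 ^ 2) := by fun_prop
  have hc₁ : Continuous fun x ↦ exp (-a * x ^ 2) * erfc (√a * √(R ^ 2 - x ^ 2)) := by fun_prop
  have hc₂ : Continuous fun x ↦ √(R ^ 2 - x ^ 2) := by fun_prop
  rw [integral_disc_eq_integral_integral hR (hc.integrableOn_disc hR),
    intervalIntegral.integral_congr hslice, intervalIntegral.integral_sub
      (((hc₁.intervalIntegrable _ _).const_mul _).add ((hc₂.intervalIntegrable _ _).const_mul _))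
      intervalIntegrable_const,
    intervalIntegral.integral_add ((hc₁.intervalIntegrable _ _).const_mul _)
      ((hc₂.intervalIntegrable _ _).const_mul _),
    intervalIntegral.integral_const_mul, intervalIntegral.integral_const_mul,
    integral_exp_neg_mul_sq_mul_erfc ha hR, integral_sqrt_sq_sub_sq hR,
    intervalIntegral.integral_const, smul_eq_mul]
  have hexp : exp (a * R ^ 2) * exp (-(a * R ^ 2)) = 1 := by
    rw [← exp_add, add_neg_cancel, exp_zero]
  have hsa : √a ≠ 0 := (sqrt_pos.2 ha).ne'
  field_simp
  linear_combination √π ^ 2 * hexp - a * R ^ 2 * mul_self_sqrt pi_pos.le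

theorem expected_number_complex_origin_GinOE (R : ℝ) (hR : 0 ≤ R) :
    Real.sqrt (2 / π) * ∫ p in {p : ℝ × ℝ | p.1 ^ 2 + p.2 ^ 2 ≤ R ^ 2},
        |p.2| * erfc (Real.sqrt 2 * |p.2|) * Real.exp (2 * p.2 ^ 2)
      = R ^ 2 - Real.sqrt (2 / π) * R + 1 / 2
        - (1 / 2) * Real.exp (2 * R ^ 2) * erfc (Real.sqrt 2 * R) := by
  rw [← disc.eq_1, integral_disc_abs_mul_erfc_mul_exp two_pos hR, sqrt_div zero_le_two]
  have hπ : √π ≠ 0 := (sqrt_pos.2 pi_pos).ne'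
  field_simp
  ring
end
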